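/- arXiv:2211.01826 — 3 statements merged into one kernel-verified Lean document; each statement's English description precedes it below -/
import Mathlib

section
/- The forgetful functor U : Lens → Cat both preserves and reflects epimorphisms; that is, a lens F : A → B is an epimorphism in the category Lens if and only if its get functor U F is an epimorphism in the category Cat of small categories and functors. -/
universe u

open CategoryTheory CategoryTheory.Limits

namespace LensPaper

section OutDefs

variable {A : Type*} [Category A] {B : Type*} [Category B] {C : Type*} [Category C]

/-- The "out-set" of an object: the collection of all morphisms out of `X`,
bundled with their targets. -/
def Out (X : A) : Type _ := Σ Y : A, X ⟶ Y

/-- The identity element of an out-set. -/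
def Out.id (X : A) : Out X := ⟨X, 𝟙 X⟩

/-- Composition of a morphism out of `X` with a morphism out of its target. -/
def Out.comp {X : A} (u : Out X) (v : Out u.1) : Out X := ⟨v.1, u.2 ≫ v.2⟩

/-- Transport of out-sets along an equality of objects. -/
def Out.cast {X Y : A} (h : X = Y) (u : Out X) : Out Y := ⟨u.1, eqToHom h.symm ≫ u.2⟩

@[simp] theorem Out.cast_rfl {X : A} (u : Out X) : Out.cast rfl u = u := by
  cases u; simp [Out.cast] <;> rfl

theorem Out.cast_cast {X Y Z : A} (h₁ : X = Y) (h₂ : Y = Z) (u : Out X) :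
    Out.cast h₂ (Out.cast h₁ u) = Out.cast (h₁.trans h₂) u := by
  subst h₁; subst h₂; simp

/-- The action of a functor on out-sets. -/
def mapOut (F : A ⥤ B) {X : A} (u : Out X) : Out (F.obj X) := ⟨F.obj u.1, F.map u.2⟩

theorem mapOut_cast (F : A ⥤ B) {X Y : A} (h : X = Y) (u : Out X) :
    mapOut F (Out.cast h u) = Out.cast (congrArg F.obj h) (mapOut F u) := by
  subst h; simp

/-- The set of all morphisms of a category, bundled with their endpoints. -/
def Mor (A : Type*) [Category A] : Type _ := Σ (X Y : A), X ⟶ Y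

/-- The action of a functor on morphisms, as a function on bundled morphisms. -/
def mapMor (F : A ⥤ B) : Mor A → Mor B := fun m => ⟨F.obj m.1, F.obj m.2.1, F.map m.2.2⟩

/-- The set of composable pairs of morphisms of a category. -/
def CompPair (A : Type*) [Category A] : Type _ := Σ (X Y Z : A), (X ⟶ Y) × (Y ⟶ Z)

/-- The action of a functor on composable pairs. -/
def mapCompPair (F : A ⥤ B) : CompPair A → CompPair B :=
  fun p => ⟨F.obj p.1, F.obj p.2.1, F.obj p.2.2.1, (F.map p.2.2.2.1, F.map p.2.2.2.2)⟩

/-- A functor is a discrete opfibration if every morphism out of `F.obj X`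
has a unique lift to a morphism out of `X`. -/
def IsDiscreteOpfibration (F : A ⥤ B) : Prop :=
  ∀ (X : A) (u : Out (F.obj X)), ∃! v : Out X, mapOut F v = u

/-- A cosieve is an injective-on-objects discrete opfibration. -/
def IsCosieve (F : A ⥤ B) : Prop :=
  IsDiscreteOpfibration F ∧ Function.Injective F.obj

end OutDefs

/-- An (asymmetric delta) lens: a get functor together with put functions
satisfying PutGet, PutId and PutPut. -/
structure DLens (A : Type*) (B : Type*) [Category A] [Category B] where
  get : A ⥤ B
  put : ∀ (X : A), Out (get.obj X) → Out X
  putGet : ∀ (X : A) (u : Out (get.obj X)), mapOut get (put X u) = u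
  putId : ∀ (X : A), put X (Out.id (get.obj X)) = Out.id X
  putPut : ∀ (X : A) (u : Out (get.obj X)) (v : Out u.1) (h : u.1 = get.obj (put X u).1),
      put X (u.comp v) = (put X u).comp (put (put X u).1 (Out.cast h v))

namespace DLens

variable {A : Type*} [Category A] {B : Type*} [Category B] {C : Type*} [Category C]

theorem put_cast (F : DLens A B) {X₁ X₂ : A} (e : X₁ = X₂) (u : Out (F.get.obj X₁)) :
    Out.cast e (F.put X₁ u) = F.put X₂ (Out.cast (congrArg F.get.obj e) u) := by
  subst e; simp

/-- The identity lens. -/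
def id (A : Type*) [Category A] : DLens A A where
  get := Functor.id A
  put X u := u
  putGet X u := rfl
  putId X := rfl
  putPut X u v h := by
    have hv : Out.cast h v = v := Out.cast_rfl v
    rw [hv]

/-- Composition of lenses. -/
def comp (F : DLens A B) (G : DLens B C) : DLens A C where
  get := F.get ⋙ G.get
  put X u := F.put X (G.put (F.get.obj X) u)
  putGet X u := by
    show mapOut G.get (mapOut F.get (F.put X (G.put (F.get.obj X) u))) = u
    rw [F.putGet, G.putGet]
  putId X := by
    show F.put X (G.put (F.get.obj X) (Out.id (G.get.obj (F.get.obj X)))) = Out.id X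
    rw [G.putId, F.putId]
  putPut X u v h := by
    have h₁ : u.1 = G.get.obj (G.put (F.get.obj X) u).1 :=
      (congrArg Sigma.fst (G.putGet (F.get.obj X) u)).symm
    show F.put X (G.put (F.get.obj X) (u.comp v)) = _
    rw [G.putPut (F.get.obj X) u v h₁]
    have h₂ : (G.put (F.get.obj X) u).1 =
        F.get.obj (F.put X (G.put (F.get.obj X) u)).1 :=
      (congrArg Sigma.fst (F.putGet X (G.put (F.get.obj X) u))).symm
    rw [F.putPut X (G.put (F.get.obj X) u) _ h₂]
    rw [put_cast G h₂, Out.cast_cast]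

end DLens

/-- The category of small categories and (asymmetric delta) lenses. -/
def LensCat : Type (u + 1) := Cat.{u, u}

/-- Regard a small category as an object of the category of lenses. -/
def LensCat.of (C : Cat.{u, u}) : LensCat.{u} := C

/-- The underlying small category of an object of the category of lenses. -/
def LensCat.toCat (A : LensCat.{u}) : Cat.{u, u} := A

instance : Category.{u} LensCat.{u} where
  Hom A B := DLens A.toCat B.toCat
  id A := DLens.id A.toCat
  comp F G := F.comp G
  id_comp F := rfl
  comp_id F := rfl
  assoc F G H := rfl

/-- The get functor of a lens, i.e. a morphism of `LensCat` regarded as a `DLens`. -/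
def LensCat.get {A B : LensCat.{u}} (F : A ⟶ B) : A.toCat ⟶ B.toCat := (DLens.get F).toCatHom

/-- The identity-on-objects forgetful functor from the category of lenses to the
category of small categories and functors, sending a lens to its get functor. -/
def lensForget : LensCat.{u} ⥤ Cat.{u, u} where
  obj A := A.toCat
  map F := (DLens.get F).toCatHom
  map_id A := rfl
  map_comp F G := rfl

end LensPaper
open CategoryTheory CategoryTheory.Limits LensPaper

/-!
Both sides are equivalent to the get functor being surjective on objects.

In `Cat`, functors into a codiscrete category are arbitrary functions on objects, so an epimorphism
is surjective on objects; conversely, when the get functor of a lens is surjective on objects, every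
morphism of `B` is, up to `eqToHom`, the image of its lift along a put, so the get functor is epi.

In `Lens`, if `F ≫ G = F ≫ H` and `F` is surjective on objects, the get functors of `G` and `H`
agree by the above, and then so do their puts because every put of `F` is injective. If `F` misses
an object, its image `P` is closed under outgoing morphisms, and the two coprojections of `B` into
two copies of `B` glued along `P` are distinct lenses that agree after `F`.
-/

universe v w

namespace CategoryTheory.Cat

theorem surjective_obj_of_epi {X Y : Cat.{v, w}} (F : X ⟶ Y) [Epi F] :
    Function.Surjective F.toFunctor.obj := by
  intro y
  by_contra hy
  push Not at hy
  let W := Cat.of (ULiftHom.{v} (Codiscrete (ULift.{w} Prop)))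
  let indicator (p : Y → Prop) : Y ⟶ W :=
    (Codiscrete.functor (fun y' => ULift.up (p y')) ⋙ ULiftHom.up).toCatHom
  have h := (cancel_epi F).1 (show F ≫ indicator (fun _ => False) = F ≫ indicator (· = y) from
    Cat.ext (Functor.ext (fun x => by
      change ULiftHom.objUp.{w, v} (Codiscrete.mk (ULift.up False)) =
        ULiftHom.objUp.{w, v} (Codiscrete.mk (ULift.up (F.toFunctor.obj x = y)))
      rw [eq_false (hy x)]) (fun _ _ _ => rfl)))
  have : False = (y = y) := congrArg (fun G : Y ⟶ W => (G.toFunctor.obj y).as.down) h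
  simp at this

theorem epi_of_surjective_mapOut {X Y : Cat.{v, w}} (F : X ⟶ Y)
    (hobj : Function.Surjective F.toFunctor.obj)
    (hmap : ∀ x : X, Function.Surjective (mapOut F.toFunctor (X := x))) : Epi F := by
  refine ⟨fun {Z} S T h => ?_⟩
  have h' : F.toFunctor ⋙ S.toFunctor = F.toFunctor ⋙ T.toFunctor := congrArg Hom.toFunctor h
  have hST : ∀ y, S.toFunctor.obj y = T.toFunctor.obj y := by
    intro y
    obtain ⟨x, rfl⟩ := hobj y
    exact Functor.congr_obj h' x
  suffices ∀ x (u : Out (F.toFunctor.obj x)), S.toFunctor.map u.2 =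
      eqToHom (hST _) ≫ T.toFunctor.map u.2 ≫ eqToHom (hST u.1).symm from
    Cat.ext (Functor.ext hST fun y _ f => by
      obtain ⟨x, rfl⟩ := hobj y
      exact this x ⟨_, f⟩)
  intro x u
  obtain ⟨v, rfl⟩ := hmap x u
  exact Functor.congr_hom h' v.2

end CategoryTheory.Cat

namespace LensPaper.DLens

variable {C : Type*} [Category C] {D : Type*} [Category D]

theorem put_injective (F : DLens C D) (X : C) : Function.Injective (F.put X) := by
  intro u v h
  rw [← F.putGet X u, ← F.putGet X v, h]

theorem mapOut_surjective (F : DLens C D) (X : C) :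
    Function.Surjective (mapOut F.get (X := X)) :=
  fun u => ⟨F.put X u, F.putGet X u⟩

theorem mem_range_obj_of_hom (F : DLens C D) {b c : D} (hb : b ∈ Set.range F.get.obj)
    (f : b ⟶ c) : c ∈ Set.range F.get.obj := by
  obtain ⟨a, rfl⟩ := hb
  obtain ⟨v, hv⟩ := F.mapOut_surjective a ⟨c, f⟩
  exact ⟨v.1, congrArg Sigma.fst hv⟩

theorem ext {L₁ L₂ : DLens C D} (hget : L₁.get = L₂.get)
    (hput : ∀ X u, L₁.put X u = L₂.put X (Out.cast (Functor.congr_obj hget X) u)) :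
    L₁ = L₂ := by
  obtain ⟨get, put₁⟩ := L₁
  obtain ⟨_, put₂⟩ := L₂
  dsimp only at hget
  subst hget
  obtain rfl : put₁ = put₂ := funext fun X => funext fun u =>
    (hput X u).trans (congrArg (put₂ X) (Out.cast_rfl u))
  rfl

theorem put_congr {L₁ L₂ : DLens C D} (h : L₁ = L₂) (X : C) (u : Out (L₁.get.obj X)) :
    L₁.put X u = L₂.put X (Out.cast (Functor.congr_obj (congrArg DLens.get h) X) u) := by
  subst h
  simp

end LensPaper.DLens

namespace LensPaper

variable {B : Type*} [Category B]

/-- Two copies of `B`, indexed by `tag`, glued along the out-closed `P`: objects in `P` occur only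
with tag `false`, and a morphism may change copy only when its target lies in `P`. -/
@[ext]
structure GlueAlong (P : B → Prop) (hP : ∀ ⦃b c : B⦄, P b → (b ⟶ c) → P c) where
  base : B
  tag : Bool
  tag_eq_false : P base → tag = false

namespace GlueAlong

variable {P : B → Prop} {hP : ∀ ⦃b c : B⦄, P b → (b ⟶ c) → P c}

instance : Category (GlueAlong P hP) where
  Hom x y := {f : x.base ⟶ y.base // x.tag = y.tag ∨ P y.base}
  id x := ⟨𝟙 _, Or.inl rfl⟩
  comp f g := ⟨f.1 ≫ g.1, by
    rcases g.2 with hg | hg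
    · rcases f.2 with hf | hf
      · exact Or.inl (hf.trans hg)
      · exact Or.inr (hP hf g.1)
    · exact Or.inr hg⟩
  id_comp f := Subtype.ext (Category.id_comp f.1)
  comp_id f := Subtype.ext (Category.comp_id f.1)
  assoc f g h := Subtype.ext (Category.assoc f.1 g.1 h.1)

def forget : GlueAlong P hP ⥤ B where
  obj := base
  map f := f.1

instance : (forget : GlueAlong P hP ⥤ B).Faithful where
  map_injective := Subtype.ext

variable [DecidablePred P]

@[simps]
def inclFunctor (t : Bool) : B ⥤ GlueAlong P hP where
  obj b := ⟨b, t && !decide (P b), by simp_all⟩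
  map {b c} f := ⟨f, by
    by_cases hc : P c
    · exact Or.inr hc
    · have hb : ¬ P b := fun hb => hc (hP hb f)
      simp [hb, hc]⟩

theorem tag_eq_of_hom {t : Bool} {b : B} {y : GlueAlong P hP}
    (f : (inclFunctor t).obj b ⟶ y) : y.tag = (t && !decide (P y.base)) := by
  by_cases hy : P y.base
  · simp [y.tag_eq_false hy, hy]
  · have hb : ¬ P b := fun hb => hy (hP hb f.1)
    rcases f.2 with h | h
    · simpa [inclFunctor, hb, hy] using h.symm
    · exact absurd h hy

def incl (t : Bool) : DLens B (GlueAlong P hP) where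
  get := inclFunctor t
  put _ u := mapOut forget u
  putGet := by
    rintro X ⟨⟨c, s, hs⟩, f⟩
    obtain rfl : s = (t && !decide (P c)) := tag_eq_of_hom f
    rfl
  putId _ := rfl
  putPut _ u v h :=
    (congrArg (Out.comp (mapOut forget u)) ((mapOut_cast forget h v).trans (Out.cast_rfl _))).symm

theorem incl_ne {b : B} (hb : ¬ P b) : (incl false : DLens B (GlueAlong P hP)) ≠ incl true := by
  intro h
  have := congrArg (fun L : DLens B (GlueAlong P hP) => (L.get.obj b).tag) h
  simp [incl, hb] at this

theorem incl_put_cast (t t' : Bool) {b : B}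
    (h : (incl t : DLens B (GlueAlong P hP)).get.obj b = (incl t').get.obj b)
    (u : Out ((incl t).get.obj b)) :
    (incl t : DLens B (GlueAlong P hP)).put b u = (incl t').put b (Out.cast h u) :=
  ((mapOut_cast forget h u).trans (Out.cast_rfl _)).symm

theorem comp_incl_eq {A : Type*} [Category A] (F : DLens A B) (hF : ∀ a, P (F.get.obj a))
    (t t' : Bool) : F.comp (incl t : DLens B (GlueAlong P hP)) = F.comp (incl t') := by
  have hobj (a : A) : (F.comp (incl t : DLens B (GlueAlong P hP))).get.obj a =
      (F.comp (incl t')).get.obj a := by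
    simp [DLens.comp, incl, GlueAlong.ext_iff, hF a]
  refine DLens.ext (CategoryTheory.Functor.ext hobj fun a a' f => forget.map_injective ?_)
    fun a u => congrArg (F.put a) (incl_put_cast t t' (hobj a) u)
  simp only [Functor.map_comp, eqToHom_map]
  exact ((Category.id_comp _).trans (Category.comp_id _)).symm

end GlueAlong

end LensPaper

namespace LensPaper.LensCat

theorem epi_lensForget_map_iff {A B : LensCat.{u}} (F : A ⟶ B) :
    Epi (lensForget.map F) ↔ Function.Surjective (DLens.get F).obj :=
  ⟨fun _ => Cat.surjective_obj_of_epi (lensForget.map F),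
    fun h => Cat.epi_of_surjective_mapOut (lensForget.map F) h (DLens.mapOut_surjective F)⟩

theorem epi_of_surjective {A B : LensCat.{u}} (F : A ⟶ B)
    (hF : Function.Surjective (DLens.get F).obj) : Epi F := by
  have := (epi_lensForget_map_iff F).2 hF
  refine ⟨fun {Z} G H h => ?_⟩
  have hget : DLens.get G = DLens.get H := congrArg Cat.Hom.toFunctor <|
    (cancel_epi (lensForget.map F)).1 <| by
      simpa only [Functor.map_comp] using congrArg lensForget.map h
  refine DLens.ext hget fun b u => ?_
  obtain ⟨a, rfl⟩ := hF b
  exact DLens.put_injective F a (DLens.put_congr h a u)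

theorem surjective_of_epi {A B : LensCat.{u}} (F : A ⟶ B) [Epi F] :
    Function.Surjective (DLens.get F).obj := by
  classical
  by_contra hF
  obtain ⟨b, hb⟩ := not_forall.1 hF
  let P (b : B.toCat) : Prop := b ∈ Set.range (DLens.get F).obj
  have hP : ∀ ⦃b c⦄, P b → (b ⟶ c) → P c := fun _ _ => DLens.mem_range_obj_of_hom F
  let Z : LensCat.{u} := LensCat.of (Cat.of (GlueAlong P hP))
  refine GlueAlong.incl_ne (hP := hP) (b := b) (by simpa [P] using hb) ?_
  exact (cancel_epi F (Z := Z)).1 (GlueAlong.comp_incl_eq F (fun a => ⟨a, rfl⟩) false true)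

theorem epi_iff_surjective {A B : LensCat.{u}} (F : A ⟶ B) :
    Epi F ↔ Function.Surjective (DLens.get F).obj :=
  ⟨fun _ => surjective_of_epi F, epi_of_surjective F⟩

end LensPaper.LensCat

/-- The forgetful functor `U : Lens ⥤ Cat` preserves and reflects
epimorphisms: a lens is an epimorphism in `Lens` iff its get functor is an
epimorphism in `Cat`. -/
theorem lensForget_epi_iff (A B : LensCat.{u}) (F : A ⟶ B) :
    Epi F ↔ Epi (lensForget.map F) :=
  (LensCat.epi_iff_surjective F).trans (LensCat.epi_lensForget_map_iff F).symm
end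

section
/- Let F₁, F₂ : A → B be lenses with coequaliser E : B → C in the category Lens. Then (1) for each lens G : B → D with G ∘ F₁ = G ∘ F₂, for every object B of B and every morphism d of D with source G B, one has φ_{G,B} d = φ_{E,B}(E(φ_{G,B} d)); and (2) E is the unique lens with get functor U E satisfying E ∘ F₁ = E ∘ F₂. -/
universe u

open CategoryTheory CategoryTheory.Limits

open CategoryTheory CategoryTheory.Limits LensPaper

/-! A lens is recovered from its get functor and the images of its put functions, since
PutGet makes `F.put X` a section of `mapOut F.get` on those images. Every lens coforking
`F1, F2` factors as `E ≫ H`, so its puts are `E`-puts, which are fixed by `E.put X ∘ mapOut E.get`;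
this is (1). A lens `E'` over the get functor of `E` coforking `F1, F2` then has all its puts in
the images of the puts of `E`, hence `E' = E`, which is (2). -/

namespace LensPaper.DLens

variable {A : Type*} [Category A] {B : Type*} [Category B]

theorem put_mapOut_put (F : DLens A B) (X : A) (u : Out (F.get.obj X)) :
    F.put X (mapOut F.get (F.put X u)) = F.put X u := by
  rw [F.putGet]

theorem eq_of_put_mem_range {F G : DLens A B} (hget : F.get = G.get)
    (hput : ∀ X u, F.put X u ∈ Set.range (G.put X)) : F = G := by
  cases F with | mk get putF putGetF _ _
  cases G with | mk get' putG putGetG _ _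
  obtain rfl : get = get' := hget
  congr
  funext X u
  obtain ⟨v, hv : putG X v = putF X u⟩ := hput X u
  obtain rfl : v = u := by rw [← putGetG X v, hv, putGetF]
  exact hv.symm

end LensPaper.DLens

/-- If `E` coequalises the lenses `F1, F2` in `Lens`, then
(1) for each lens `G` coforking `F1` and `F2`, each object `X` and each morphism
`u` out of `G X`, one has `φ_{G,X} u = φ_{E,X} (E (φ_{G,X} u))`; and
(2) `E` is the unique lens above its get functor coforking `F1` and `F2`. -/
theorem coequaliser_necessary_conditions (A B C : LensCat.{u}) (F1 F2 : A ⟶ B)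
    (E : B ⟶ C) (w : F1 ≫ E = F2 ≫ E) (hE : IsColimit (Cofork.ofπ E w)) :
    (∀ (D : LensCat.{u}) (G : B ⟶ D), F1 ≫ G = F2 ≫ G →
      ∀ (X : B.toCat) (u : Out ((DLens.get G).obj X)),
        DLens.put G X u = DLens.put E X (mapOut (DLens.get E) (DLens.put G X u))) ∧
    (∀ E' : B ⟶ C, DLens.get E' = DLens.get E → F1 ≫ E' = F2 ≫ E' → E' = E) := by
  have puts_of_cofork : ∀ (D : LensCat.{u}) (G : B ⟶ D), F1 ≫ G = F2 ≫ G →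
      ∀ (X : B.toCat) (u : Out ((DLens.get G).obj X)),
        DLens.put G X u = DLens.put E X (mapOut (DLens.get E) (DLens.put G X u)) := by
    intro D G hG X u
    obtain ⟨H, rfl⟩ : ∃ H : C ⟶ D, E ≫ H = G := ⟨_, (Cofork.IsColimit.desc' hE G hG).2⟩
    exact (E.put_mapOut_put X (H.put _ u)).symm
  refine ⟨puts_of_cofork, fun E' hget hE' => DLens.eq_of_put_mem_range hget fun X u => ?_⟩
  exact ⟨_, (puts_of_cofork C E' hE' X u).symm⟩
end

section
/- Every functor E : B → C between small categories that is surjective on composable pairs is an effective epimorphism in the category Cat of small categories and functors: E has a kernel pair F₁, F₂ : Ker E → B (the pullback of E along itself), and E is the coequaliser of F₁ and F₂. -/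
universe u

open CategoryTheory CategoryTheory.Limits

open CategoryTheory CategoryTheory.Limits LensPaper

universe v₁ v₂ v₃ u₁ u₂ u₃

/-!
A functor `G : B ⥤ D` coequalising the kernel pair of `E` identifies any two objects, and any
two morphisms, with the same image under `E`: test it on the concrete kernel pair, the category
of pairs of objects and of morphisms with equal images, which maps into the pullback in `Cat`.
So `G` descends along `E` by choosing preimages. Lifts of single morphisms make the descended
functor well defined, and a composable pair in `C` lifts to a composable pair in `B`, which is
why it preserves composition. It is unique because `E` is surjective on morphisms.
-/

theorem CategoryTheory.IsHomLift.unique {B : Type u₁} [Category.{v₁} B] {C : Type u₂}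
    [Category.{v₂} C] {p : B ⥤ C} {b b' : B} {c c' : C} (φ : b ⟶ b') (f g : c ⟶ c')
    [p.IsHomLift f φ] [p.IsHomLift g φ] : f = g :=
  (IsHomLift.fac p f φ).trans (IsHomLift.fac p g φ).symm

namespace CategoryTheory.Functor

variable {B : Type u₁} [Category.{v₁} B] {C : Type u₂} [Category.{v₂} C]
  {D : Type u₃} [Category.{v₃} D]

theorem exists_isHomLift_of_surjective_mapCompPair {E : B ⥤ C}
    (hE : Function.Surjective (mapCompPair E)) {c₁ c₂ c₃ : C} (h : c₁ ⟶ c₂) (h' : c₂ ⟶ c₃) :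
    ∃ (b₁ b₂ b₃ : B) (f : b₁ ⟶ b₂) (f' : b₂ ⟶ b₃), E.IsHomLift h f ∧ E.IsHomLift h' f' := by
  obtain ⟨⟨b₁, b₂, b₃, f, f'⟩, hp⟩ := hE ⟨c₁, c₂, c₃, (h, h')⟩
  cases hp
  exact ⟨b₁, b₂, b₃, f, f', inferInstance, inferInstance⟩

def SurjectiveOnMorphisms (E : B ⥤ C) : Prop :=
  ∀ ⦃c c' : C⦄ (h : c ⟶ c'), ∃ φ : Arrow B, E.IsHomLift h φ.hom

theorem surjectiveOnMorphisms_of_surjective_mapCompPair {E : B ⥤ C}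
    (hE : Function.Surjective (mapCompPair E)) : E.SurjectiveOnMorphisms := fun _ c' h => by
  obtain ⟨_, _, _, f, _, hf, -⟩ := exists_isHomLift_of_surjective_mapCompPair hE h (𝟙 c')
  exact ⟨Arrow.mk f, hf⟩

namespace SurjectiveOnMorphisms

variable {E : B ⥤ C}

theorem exists_obj_eq (hE : E.SurjectiveOnMorphisms) (c : C) : ∃ b : B, E.obj b = c := by
  obtain ⟨φ, hφ⟩ := hE (𝟙 c)
  exact ⟨φ.left, IsHomLift.domain_eq E (𝟙 c) φ.hom⟩

theorem eq_of_comp_eq (hE : E.SurjectiveOnMorphisms) {m m' : C ⥤ D} (hm : E ⋙ m = E ⋙ m') :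
    m = m' := by
  have hobj : ∀ c, m.obj c = m'.obj c := fun c => by
    obtain ⟨b, rfl⟩ := hE.exists_obj_eq c
    exact Functor.congr_obj hm b
  refine Functor.ext hobj fun c c' h => ?_
  obtain ⟨φ, hφ⟩ := hE h
  cases hφ
  simpa using Functor.congr_hom hm φ.hom

end SurjectiveOnMorphisms

structure KernelPair (E : B ⥤ C) where
  left : B
  right : B
  eq : E.obj left = E.obj right

namespace KernelPair

variable {E : B ⥤ C}

@[ext]
structure Hom (p q : E.KernelPair) where
  left : p.left ⟶ q.left
  right : p.right ⟶ q.right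
  isHomLift : E.IsHomLift (E.map right) left

attribute [instance] Hom.isHomLift

instance : Category E.KernelPair where
  Hom := Hom
  id p := ⟨𝟙 _, 𝟙 _, by simpa using IsHomLift.id p.eq⟩
  comp f g := ⟨f.left ≫ g.left, f.right ≫ g.right, by rw [E.map_comp]; infer_instance⟩
  id_comp f := by apply Hom.ext <;> simp
  comp_id f := by apply Hom.ext <;> simp
  assoc f g h := by apply Hom.ext <;> simp

variable (E)

def fst : E.KernelPair ⥤ B where
  obj p := p.left
  map f := f.left

def snd : E.KernelPair ⥤ B where
  obj p := p.right
  map f := f.right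

theorem condition : fst E ⋙ E = snd E ⋙ E :=
  Functor.ext (fun p => p.eq) fun _ _ f => IsHomLift.fac' E (E.map f.right) f.left

variable {E} {G : B ⥤ D}

theorem obj_eq (hG : fst E ⋙ G = snd E ⋙ G) {b b' : B} (h : E.obj b = E.obj b') :
    G.obj b = G.obj b' :=
  Functor.congr_obj hG ⟨b, b', h⟩

theorem isHomLift_map (hG : fst E ⋙ G = snd E ⋙ G) {b₁ b₂ b₁' b₂' : B} (f : b₁ ⟶ b₂)
    (g : b₁' ⟶ b₂') [E.IsHomLift (E.map g) f] : G.IsHomLift (G.map g) f :=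
  IsHomLift.of_fac' G _ f (obj_eq hG (IsHomLift.domain_eq E (E.map g) f))
    (obj_eq hG (IsHomLift.codomain_eq E (E.map g) f)) <| Functor.congr_hom hG
    (X := ⟨b₁, b₁', IsHomLift.domain_eq E (E.map g) f⟩)
    (Y := ⟨b₂, b₂', IsHomLift.codomain_eq E (E.map g) f⟩) ⟨f, g, inferInstance⟩

noncomputable def descObj (hE : E.SurjectiveOnMorphisms) (G : B ⥤ D) (c : C) : D :=
  G.obj (hE.exists_obj_eq c).choose

theorem obj_eq_descObj (hE : E.SurjectiveOnMorphisms) (hG : fst E ⋙ G = snd E ⋙ G) {b : B}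
    {c : C} (hb : E.obj b = c) : G.obj b = descObj hE G c :=
  obj_eq hG (hb.trans (hE.exists_obj_eq c).choose_spec.symm)

noncomputable def descMap (hE : E.SurjectiveOnMorphisms) (hG : fst E ⋙ G = snd E ⋙ G)
    {c c' : C} (h : c ⟶ c') : descObj hE G c ⟶ descObj hE G c' :=
  haveI := (hE h).choose_spec
  eqToHom (obj_eq_descObj hE hG (IsHomLift.domain_eq E h (hE h).choose.hom)).symm ≫
    G.map (hE h).choose.hom ≫
      eqToHom (obj_eq_descObj hE hG (IsHomLift.codomain_eq E h (hE h).choose.hom))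

theorem isHomLift_descMap (hE : E.SurjectiveOnMorphisms) (hG : fst E ⋙ G = snd E ⋙ G)
    {c c' : C} (h : c ⟶ c') {b b' : B} (f : b ⟶ b') [E.IsHomLift h f] :
    G.IsHomLift (descMap hE hG h) f := by
  have := (hE h).choose_spec
  have : E.IsHomLift (E.map (hE h).choose.hom) f := by
    rw [IsHomLift.fac' E h (hE h).choose.hom]
    infer_instance
  have := isHomLift_map hG f (hE h).choose.hom
  unfold descMap
  infer_instance

noncomputable def desc (hE : Function.Surjective (mapCompPair E))
    (hG : fst E ⋙ G = snd E ⋙ G) : C ⥤ D where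
  obj := descObj (surjectiveOnMorphisms_of_surjective_mapCompPair hE) G
  map := descMap (surjectiveOnMorphisms_of_surjective_mapCompPair hE) hG
  map_id c := by
    have hE' := surjectiveOnMorphisms_of_surjective_mapCompPair hE
    obtain ⟨b, rfl⟩ := hE'.exists_obj_eq c
    have := isHomLift_descMap hE' hG (𝟙 (E.obj b)) (𝟙 b)
    rw [IsHomLift.fac G (descMap hE' hG (𝟙 (E.obj b))) (𝟙 b)]
    simp
  map_comp h h' := by
    have hE' := surjectiveOnMorphisms_of_surjective_mapCompPair hE
    obtain ⟨_, _, _, f, f', _, _⟩ := exists_isHomLift_of_surjective_mapCompPair hE h h'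
    have := isHomLift_descMap hE' hG h f
    have := isHomLift_descMap hE' hG h' f'
    have := isHomLift_descMap hE' hG (h ≫ h') (f ≫ f')
    exact IsHomLift.unique (p := G) (f ≫ f') (descMap hE' hG (h ≫ h'))
      (descMap hE' hG h ≫ descMap hE' hG h')

theorem comp_desc (hE : Function.Surjective (mapCompPair E)) (hG : fst E ⋙ G = snd E ⋙ G) :
    E ⋙ desc hE hG = G := by
  have hE' := surjectiveOnMorphisms_of_surjective_mapCompPair hE
  refine Functor.ext (fun b => (obj_eq_descObj hE' hG rfl).symm) fun _ _ f => ?_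
  have := isHomLift_descMap hE' hG (E.map f) f
  exact IsHomLift.fac G (descMap hE' hG (E.map f)) f

end KernelPair

theorem KernelPair.fst_comp_eq_snd_comp_of_pullback {B C D : Cat.{u, u}} {E : B ⟶ C}
    {G : B ⟶ D} (hG : pullback.fst E E ≫ G = pullback.snd E E ≫ G) :
    fst E.toFunctor ⋙ G.toFunctor = snd E.toFunctor ⋙ G.toFunctor := by
  have w : (Cat.Hom.ofFunctor (fst E.toFunctor) : Cat.of _ ⟶ B) ≫ E =
      Cat.Hom.ofFunctor (snd E.toFunctor) ≫ E :=
    Cat.ext (condition E.toFunctor)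
  have h := pullback.lift _ _ w ≫= hG
  rw [pullback.lift_fst_assoc, pullback.lift_snd_assoc] at h
  exact congrArg Cat.Hom.toFunctor h

end CategoryTheory.Functor

/-- Every functor between small categories that is surjective
on composable pairs is an effective epimorphism in `Cat`: it has a kernel pair
(the pullback of it along itself), and it is the coequaliser of its kernel
pair. -/
theorem surjective_on_composable_pairs_effective_epi (B C : Cat.{u, u})
    (E : B ⟶ C) (hsurj : Function.Surjective (mapCompPair E.toFunctor)) :
    ∃ (K : Cat.{u, u}) (F1 F2 : K ⟶ B) (hpb : IsPullback F1 F2 E E),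
      Nonempty (IsColimit (Cofork.ofπ E hpb.w)) := by
  refine ⟨pullback E E, pullback.fst E E, pullback.snd E E, IsPullback.of_hasPullback E E, ⟨?_⟩⟩
  have hker (s : Cofork (pullback.fst E E) (pullback.snd E E)) :=
    Functor.KernelPair.fst_comp_eq_snd_comp_of_pullback s.condition
  refine Cofork.IsColimit.mk _ (fun s => (Functor.KernelPair.desc hsurj (hker s)).toCatHom)
    (fun s => Cat.ext (Functor.KernelPair.comp_desc hsurj (hker s))) fun s m hm => Cat.ext ?_
  apply (Functor.surjectiveOnMorphisms_of_surjective_mapCompPair hsurj).eq_of_comp_eq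
  exact (congrArg Cat.Hom.toFunctor hm).trans (Functor.KernelPair.comp_desc hsurj (hker s)).symm
end
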